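/- Let X be a nonempty finite set and u, v : X → ℝ, and suppose u is less risk-averse than v. Then: (I) for any x, y ∈ X, u(x) ≥ u(y) implies v(x) ≥ v(y), and u(x) > u(y) implies v(x) > v(y); and (II) for any x, y, z ∈ X with u(x) < u(y) < u(z), (u(z) − u(y))/(u(y) − u(x)) ≥ (v(z) − v(y))/(v(y) − v(x)). -/

import Mathlib

open Finset

/-- A lottery on a finite set `X`: a function `p : X → [0,1]` summing to 1. -/
def IsLottery {X : Type*} [Fintype X] (p : X → ℝ) : Prop :=
  (∀ x, 0 ≤ p x ∧ p x ≤ 1) ∧ ∑ x, p x = 1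

/-- `u` is less risk-averse than `v` (Yaari). -/
def LessRiskAverse {X : Type*} [Fintype X] (u v : X → ℝ) : Prop :=
  ∀ (y : X) (p : X → ℝ), IsLottery p →
    (u y ≥ ∑ x, u x * p x → v y ≥ ∑ x, v x * p x) ∧
    (u y > ∑ x, u x * p x → v y > ∑ x, v x * p x)

/-- A function `φ : Θ → ℝ` on a poset is single-crossing. -/
def SingleCrossing {Θ : Type*} [PartialOrder Θ] (φ : Θ → ℝ) : Prop :=
  ∀ ⦃θ θ' : Θ⦄, θ ≤ θ' → (φ θ ≥ 0 → φ θ' ≥ 0) ∧ (φ θ > 0 → φ θ' > 0)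

/-- A family `Φ` of functions `Θ → ℝ` satisfies signed-ratio monotonicity. -/
def SignedRatioMonotone {Θ : Type*} [PartialOrder Θ] (Φ : Set (Θ → ℝ)) : Prop :=
  ∀ φ ∈ Φ, ∀ ψ ∈ Φ, ∀ ⦃θ θ' : Θ⦄, θ ≤ θ' →
    φ θ < 0 → 0 < ψ θ → -φ θ * ψ θ' ≥ -φ θ' * ψ θ

/- Testing `LessRiskAverse` against a point mass at `y` gives the ordinal part (I). For (II), the
lottery putting weight `a = (u z - u y) / (u z - u x)` on `x` and `1 - a` on `z` has `u`-expectation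
exactly `u y`, so `v y` dominates its `v`-expectation; cleared of denominators, this is the claimed
comparison of slopes. -/

lemma IsLottery.pi_single {X : Type*} [Fintype X] [DecidableEq X] (y : X) :
    IsLottery (Pi.single y 1 : X → ℝ) := by
  refine ⟨fun t => ?_, by simp⟩
  rcases eq_or_ne t y with rfl | hty <;> simp [*]

lemma IsLottery.convex_comb {X : Type*} [Fintype X] {p q : X → ℝ} (hp : IsLottery p)
    (hq : IsLottery q) {a : ℝ} (ha₀ : 0 ≤ a) (ha₁ : a ≤ 1) :
    IsLottery (a • p + (1 - a) • q) := by
  refine ⟨fun t => ?_, ?_⟩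
  · obtain ⟨⟨hp₀, hp₁⟩, ⟨hq₀, hq₁⟩⟩ := And.intro (hp.1 t) (hq.1 t)
    simp only [Pi.add_apply, Pi.smul_apply, smul_eq_mul]
    constructor <;> nlinarith
  · simp only [Pi.add_apply, Pi.smul_apply, smul_eq_mul, sum_add_distrib, ← mul_sum, hp.2, hq.2]
    ring

lemma sum_mul_pi_single {X : Type*} [Fintype X] [DecidableEq X] (f : X → ℝ) (y : X) :
    ∑ t, f t * (Pi.single y 1 : X → ℝ) t = f y := by
  simp [Pi.single_apply]

lemma sum_mul_convex_comb {X : Type*} [Fintype X] (f p q : X → ℝ) (a : ℝ) :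
    ∑ t, f t * (a • p + (1 - a) • q) t = a * ∑ t, f t * p t + (1 - a) * ∑ t, f t * q t := by
  simp only [Pi.add_apply, Pi.smul_apply, smul_eq_mul, mul_add, sum_add_distrib, mul_sum]
  congr 1 <;> exact sum_congr rfl fun _ _ => by ring

namespace LessRiskAverse

variable {X : Type*} [Fintype X] {u v : X → ℝ}

lemma le_of_le (h : LessRiskAverse u v) {x y : X} (hxy : u y ≤ u x) : v y ≤ v x := by
  classical
  have key := (h x _ (IsLottery.pi_single y)).1
  rw [sum_mul_pi_single, sum_mul_pi_single] at key
  exact key hxy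

lemma lt_of_lt (h : LessRiskAverse u v) {x y : X} (hxy : u y < u x) : v y < v x := by
  classical
  have key := (h x _ (IsLottery.pi_single y)).2
  rw [sum_mul_pi_single, sum_mul_pi_single] at key
  exact key hxy

lemma convex_comb_le (h : LessRiskAverse u v) {x y z : X} {a : ℝ} (ha₀ : 0 ≤ a) (ha₁ : a ≤ 1)
    (hu : a * u x + (1 - a) * u z ≤ u y) : a * v x + (1 - a) * v z ≤ v y := by
  classical
  have hp := (IsLottery.pi_single x).convex_comb (IsLottery.pi_single z) ha₀ ha₁
  have key := (h y _ hp).1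
  simp only [sum_mul_convex_comb, sum_mul_pi_single] at key
  exact key hu

lemma slope_ratio_ge (h : LessRiskAverse u v) {x y z : X} (hxy : u x < u y) (hyz : u y < u z) :
    (u z - u y) / (u y - u x) ≥ (v z - v y) / (v y - v x) := by
  have hxz : 0 < u z - u x := by linarith
  obtain ⟨a, ha₀, ha₁, ha_mul⟩ : ∃ a : ℝ, 0 ≤ a ∧ a ≤ 1 ∧ a * (u z - u x) = u z - u y :=
    ⟨(u z - u y) / (u z - u x), div_nonneg (by linarith) hxz.le, (div_le_one hxz).2 (by linarith),
      div_mul_cancel₀ _ hxz.ne'⟩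
  have hv : a * v x + (1 - a) * v z ≤ v y :=
    h.convex_comb_le ha₀ ha₁ (le_of_eq (by linear_combination -ha_mul))
  have hv_cleared : (u z - u y) * v x + (u y - u x) * v z ≤ (u z - u x) * v y :=
    calc (u z - u y) * v x + (u y - u x) * v z
        = (u z - u x) * (a * v x + (1 - a) * v z) := by linear_combination (v z - v x) * ha_mul
      _ ≤ (u z - u x) * v y := mul_le_mul_of_nonneg_left hv hxz.le
  have hvxy : 0 < v y - v x := sub_pos.2 (h.lt_of_lt hxy)
  rw [ge_iff_le, div_le_div_iff₀ hvxy (by linarith)]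
  linarith

end LessRiskAverse

theorem stmt_14_general {X : Type*} [Fintype X] (u v : X → ℝ)
    (h : LessRiskAverse u v) :
    (∀ x y : X, (u x ≥ u y → v x ≥ v y) ∧ (u x > u y → v x > v y)) ∧
      (∀ x y z : X, u x < u y → u y < u z →
        (u z - u y) / (u y - u x) ≥ (v z - v y) / (v y - v x)) :=
  ⟨fun _ _ => ⟨h.le_of_le, h.lt_of_lt⟩, fun _ _ _ => h.slope_ratio_ge⟩

theorem stmt_14 {X : Type*} [Fintype X] [Nonempty X] (u v : X → ℝ)
    (h : LessRiskAverse u v) :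
    (∀ x y : X, (u x ≥ u y → v x ≥ v y) ∧ (u x > u y → v x > v y)) ∧
      (∀ x y z : X, u x < u y → u y < u z →
        (u z - u y) / (u y - u x) ≥ (v z - v y) / (v y - v x)) :=
  stmt_14_general u v h
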